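/- Let (θ, ≤) be a stratifying system of size t in mod R, 0 ≠ M ∈ F(θ), i = min(Supp_θ(M)), and m = [M : θ(i)]. Then there exists an exact sequence 0 → N → M → θ(i)^m → 0 in F(θ) with min(Supp_θ(N)) > i. -/

import Mathlib

open CategoryTheory CategoryTheory.Limits

attribute [local instance] Classical.propDecidable

namespace ITPaper

variable (R : Type) [Ring R]

/-- `f : P ⟶ M` is a projective cover: `P` projective, `f` epi, and the kernel of `f`
is superfluous (any `g` with `g ≫ f` epi is itself epi). -/
def IsProjCover {P M : ModuleCat R} (f : P ⟶ M) : Prop :=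
  Projective P ∧ Epi f ∧ ∀ ⦃Q : ModuleCat R⦄ (g : Q ⟶ P), Epi (g ≫ f) → Epi g

/-- A chosen first syzygy: kernel of a chosen projective cover (if one exists). -/
noncomputable def syz (M : ModuleCat R) : ModuleCat R :=
  if h : ∃ (P : ModuleCat R) (f : P ⟶ M), IsProjCover R f then
    kernel h.choose_spec.choose
  else M

/-- iterated syzygy -/
noncomputable def syzN (n : ℕ) (M : ModuleCat R) : ModuleCat R := (syz R)^[n] M

/-- `pdLE n M` : `M` has a projective resolution of length `≤ n`. -/
def pdLE : ℕ → ModuleCat R → Prop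
  | 0, M => Projective M
  | (n+1), M => ∃ (P : ModuleCat R) (f : P ⟶ M), Projective P ∧ Epi f ∧ pdLE n (kernel f)

/-- projective dimension, with value `⊤` if infinite. -/
noncomputable def pd (M : ModuleCat R) : ℕ∞ :=
  sInf {d : ℕ∞ | ∃ n : ℕ, d = (n : ℕ∞) ∧ pdLE R n M}

/-- projective finitistic dimension of a class of modules. -/
noncomputable def pfd (S : Set (ModuleCat R)) : ℕ∞ :=
  sSup {d : ℕ∞ | d ≠ ⊤ ∧ ∃ C ∈ S, pd R C = d}

/-- indecomposable module -/
def Indec (M : ModuleCat R) : Prop :=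
  ¬ IsZero M ∧ ∀ (A B : ModuleCat R), Nonempty (M ≅ A ⊞ B) → IsZero A ∨ IsZero B

/-- indecomposable non-projective finitely generated modules -/
def IndecNP := {M : ModuleCat R // Indec R M ∧ ¬ Projective M ∧ Module.Finite R M}

instance isoSetoid : Setoid (IndecNP R) where
  r A B := Nonempty (A.1 ≅ B.1)
  iseqv := ⟨fun A => ⟨Iso.refl _⟩, fun ⟨e⟩ => ⟨e.symm⟩, fun ⟨e⟩ ⟨f⟩ => ⟨e.trans f⟩⟩

/-- iso-classes of indecomposable non-projective f.g. modules -/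
def IsoCls := Quotient (isoSetoid R)

/-- the free abelian group `K` on iso-classes of indecomposable non-projective f.g. modules -/
def K := FreeAbelianGroup (IsoCls R)

noncomputable instance : AddCommGroup (K R) := by unfold K; infer_instance

/-- the class `[M]` of a module in `K`: sum of classes of its non-projective
indecomposable summands (via a chosen decomposition). -/
noncomputable def cls (M : ModuleCat R) : K R :=
  if h : ∃ (n : ℕ) (D : Fin n → IndecNP R) (P : ModuleCat R), Projective P ∧
      Nonempty (M ≅ P ⊞ (⨁ fun i => (D i).1)) then
    ∑ i : Fin h.choose, FreeAbelianGroup.of (Quotient.mk (isoSetoid R) (h.choose_spec.choose i))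
  else 0

/-- the syzygy operator on `K` -/
noncomputable def OmegaK : K R →+ K R :=
  FreeAbelianGroup.lift (fun c : IsoCls R => cls R (syz R (Quotient.out c).1))

noncomputable def OmegaPow : ℕ → (K R →+ K R)
  | 0 => AddMonoidHom.id _
  | (n+1) => (OmegaK R).comp (OmegaPow n)

/-- `⟨M⟩`: subgroup of `K` generated by the classes of indecomposable direct summands of `M` -/
noncomputable def gen (M : ModuleCat R) : AddSubgroup (K R) :=
  AddSubgroup.closure {x | ∃ N : IndecNP R,
    (∃ C : ModuleCat R, Nonempty (M ≅ N.1 ⊞ C)) ∧ x = FreeAbelianGroup.of (Quotient.mk (isoSetoid R) N)}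

/-- `Ω^n⟨M⟩` -/
noncomputable def OmegaSub (n : ℕ) (M : ModuleCat R) : AddSubgroup (K R) :=
  (gen R M).map (OmegaPow R n)

/-- the Igusa–Todorov `Φ`: least `n` such that `Ω : Ω^m⟨M⟩ → Ω^{m+1}⟨M⟩` is an
isomorphism for all `m ≥ n`. -/
noncomputable def Phi (M : ModuleCat R) : ℕ :=
  sInf {n : ℕ | ∀ m, n ≤ m → Set.InjOn (⇑(OmegaK R)) ((OmegaSub R m M : AddSubgroup (K R)) : Set (K R))}

/-- the set of direct summands of `Ω^{Φ(M)} M` -/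
noncomputable def CM (M : ModuleCat R) : Set (ModuleCat R) :=
  {C | ∃ D : ModuleCat R, Nonempty (syzN R (Phi R M) M ≅ C ⊞ D)}

/-- the Igusa–Todorov function `Ψ` -/
noncomputable def Psi (M : ModuleCat R) : ℕ∞ := (Phi R M : ℕ∞) + pfd R (CM R M)

/-- `add M` -/
def addCat (M : ModuleCat R) : Set (ModuleCat R) :=
  {X | ∃ (n : ℕ) (C : ModuleCat R), Nonempty ((X ⊞ C) ≅ ⨁ (fun _ : Fin n => M))}


/-- A `θ`-filtration of `M`: a chain `0 = c 0 ≤ ⋯ ≤ c n = M` of submodules whose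
successive quotients are isomorphic to modules `θ (typ i)`. -/
structure Filtration {t : ℕ} (θ : Fin t → ModuleCat R) (M : ModuleCat R) where
  n : ℕ
  c : Fin (n+1) → Submodule R M
  bot : c 0 = ⊥
  top : c (Fin.last n) = ⊤
  mono : ∀ i : Fin n, c i.castSucc ≤ c i.succ
  typ : Fin n → Fin t
  iso : ∀ i : Fin n,
    Nonempty (((c i.succ : Submodule R M) ⧸ ((c i.castSucc).comap (c i.succ).subtype))
      ≃ₗ[R] (θ (typ i)))

/-- `M ∈ F(θ)` -/
def InFilt {t : ℕ} (θ : Fin t → ModuleCat R) (M : ModuleCat R) : Prop :=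
  Nonempty (Filtration R θ M)

/-- the filtration multiplicity `[M : θ i]` (computed from a chosen filtration;
by Erdmann–Sáenz it does not depend on this choice). -/
noncomputable def mult {t : ℕ} (θ : Fin t → ModuleCat R) (M : ModuleCat R) (i : Fin t) : ℕ :=
  if h : Nonempty (Filtration R θ M) then
    (Finset.univ.filter (fun x => h.some.typ x = i)).card
  else 0

/-- the category `F(θ)` inside `mod R` -/
def FCat {t : ℕ} (θ : Fin t → ModuleCat R) : Set (ModuleCat R) :=
  {M | Module.Finite R M ∧ InFilt R θ M}

/-- A stratifying system of size `t`. -/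
structure StratSys (t : ℕ) where
  θ : Fin t → ModuleCat R
  fg : ∀ i, Module.Finite R (θ i)
  indec : ∀ i, Indec R (θ i)
  homZero : ∀ i j : Fin t, i < j → ∀ f : θ j ⟶ θ i, f = 0
  extZero : ∀ i j : Fin t, i ≤ j → ∀ (E : ModuleCat R) (f : θ i ⟶ E) (g : E ⟶ θ j)
    (w : f ≫ g = 0), (ShortComplex.mk f g w).ShortExact → ∃ s : θ j ⟶ E, s ≫ g = 𝟙 (θ j)

/-- `Ψ`-dimension of a class -/
noncomputable def PsiD (S : Set (ModuleCat R)) : ℕ∞ :=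
  sSup {d : ℕ∞ | ∃ M ∈ S, Psi R M = d}

/-!
If every filtration type of `M` is at least `i`, walk up a `θ`-filtration of `M` and move each
`θ i`-layer above the layers of larger type: an extension of `θ j` by a power of `θ i` splits
when `i ≤ j`, since `Ext¹(θ j, θ i) = 0`. All `θ i`-layers then form a top quotient `θ i ^ m`,
whose kernel `N` is filtered by the remaining types, all `> i`. Every `θ`-filtration of `N`
has its least type `i₀` as a quotient of `N`, and `Hom(θ a, θ i₀) = 0` for `a > i₀`; hence
every filtration of `N` also has only types `> i`.
-/

universe v

section LinearAlgebra

variable {R} {B : Type*} [AddCommGroup B] [Module R B]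

noncomputable def subquotientEquivMap (P K : Submodule R B) :
    (K ⧸ P.comap K.subtype) ≃ₗ[R] K.map P.mkQ :=
  (Submodule.quotEquivOfEq _ _ (by rw [LinearMap.ker_comp, Submodule.ker_mkQ])).trans
    ((P.mkQ ∘ₗ K.subtype).quotKerEquivRange.trans
      (LinearEquiv.ofEq _ _ (by rw [LinearMap.range_comp, Submodule.range_subtype])))

noncomputable def quotientComapMkQEquivOfIsCompl {P : Submodule R B} {D C : Submodule R (B ⧸ P)}
    (hC : IsCompl D C) : (B ⧸ C.comap P.mkQ) ≃ₗ[R] D :=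
  (P.quotientQuotientEquivQuotient _ (P.le_comap_mkQ C)).symm.trans
    ((Submodule.quotEquivOfEq _ _ (Submodule.map_comap_eq_of_surjective P.mkQ_surjective C)).trans
      (Submodule.quotientEquivOfIsCompl C D hC.symm))

noncomputable def subquotientComapMkQEquivOfIsCompl {P : Submodule R B}
    {D C : Submodule R (B ⧸ P)} (hC : IsCompl D C) :
    (C.comap P.mkQ ⧸ P.comap (C.comap P.mkQ).subtype) ≃ₗ[R] (B ⧸ P) ⧸ D :=
  (subquotientEquivMap P _).trans
    ((LinearEquiv.ofEq _ _ (Submodule.map_comap_eq_of_surjective P.mkQ_surjective C)).trans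
      (Submodule.quotientEquivOfIsCompl D C hC).symm)

theorem isCompl_ker_range_of_comp_eq_id {T : Type*} [AddCommGroup T] [Module R T]
    {g : B →ₗ[R] T} {s : T →ₗ[R] B} (hs : g ∘ₗ s = .id) :
    IsCompl (LinearMap.ker g) (LinearMap.range s) := by
  have hgs (y : T) : g (s y) = y := LinearMap.congr_fun hs y
  constructor
  · rw [Submodule.disjoint_def]
    rintro _ hx ⟨y, rfl⟩
    rw [LinearMap.mem_ker, hgs] at hx
    simp [hx]
  · rw [codisjoint_iff, eq_top_iff]
    intro x _
    exact Submodule.mem_sup.mpr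
      ⟨x - s (g x), by simp [hgs], s (g x), ⟨g x, rfl⟩, sub_add_cancel _ _⟩

theorem isCompl_map_subtype_of_isCompl_quotient {P K : Submodule R B} (hPK : P ≤ K)
    {C : Submodule R (B ⧸ P)} (hC : IsCompl (K.map P.mkQ) C)
    {C₁ : Submodule R (C.comap P.mkQ)} (hC₁ : IsCompl (P.comap (C.comap P.mkQ).subtype) C₁) :
    IsCompl K (C₁.map (C.comap P.mkQ).subtype) := by
  constructor
  · rw [Submodule.disjoint_def]
    rintro _ hxK ⟨c, hc, rfl⟩
    have hcP : P.mkQ c = 0 :=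
      Submodule.disjoint_def.mp hC.disjoint _ (Submodule.mem_map_of_mem hxK) c.2
    have := Submodule.disjoint_def.mp hC₁.disjoint c ((Submodule.Quotient.mk_eq_zero P).mp hcP) hc
    simp [this]
  · rw [codisjoint_iff, eq_top_iff]
    intro x _
    obtain ⟨_, ⟨k, hk, rfl⟩, c, hc, hkc⟩ :=
      Submodule.mem_sup.mp (hC.sup_eq_top ▸ Submodule.mem_top : P.mkQ x ∈ K.map P.mkQ ⊔ C)
    have hxk : x - k ∈ C.comap P.mkQ := by
      rwa [Submodule.mem_comap, map_sub, ← hkc, add_sub_cancel_left]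
    obtain ⟨p, hp, c₁, hc₁, hpc⟩ := Submodule.mem_sup.mp
      (hC₁.sup_eq_top ▸ Submodule.mem_top : (⟨x - k, hxk⟩ : C.comap P.mkQ) ∈ _ ⊔ C₁)
    refine Submodule.mem_sup.mpr ⟨k + p, K.add_mem hk (hPK hp), c₁, ⟨c₁, hc₁, rfl⟩, ?_⟩
    have := congrArg Subtype.val hpc
    simp only [Submodule.coe_add] at this
    simp [add_assoc, this]

end LinearAlgebra

section ExtensionsSplit

/-- `Ext¹(T, X) = 0`. -/
def ExtensionsSplit (T X : Type v) [AddCommGroup T] [Module R T] [AddCommGroup X] [Module R X] :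
    Prop :=
  ∀ (B : Type v) [AddCommGroup B] [Module R B] (K : Submodule R B),
    Nonempty (K ≃ₗ[R] X) → Nonempty ((B ⧸ K) ≃ₗ[R] T) → ∃ C : Submodule R B, IsCompl K C

variable {R} {T X Y : Type v} [AddCommGroup T] [Module R T] [AddCommGroup X] [Module R X]
  [AddCommGroup Y] [Module R Y]

theorem ExtensionsSplit.congr (e : X ≃ₗ[R] Y) (h : ExtensionsSplit R T X) :
    ExtensionsSplit R T Y :=
  fun B _ _ K ⟨e'⟩ hK => h B K ⟨e'.trans e.symm⟩ hK

theorem ExtensionsSplit.of_subsingleton [Subsingleton X] : ExtensionsSplit R T X := by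
  rintro B _ _ K ⟨e⟩ -
  have : Subsingleton K := e.toEquiv.subsingleton
  exact ⟨⊤, Submodule.eq_bot_of_subsingleton (p := K) ▸ isCompl_bot_top⟩

theorem ExtensionsSplit.of_submodule_quotient (X' : Submodule R X)
    (h' : ExtensionsSplit R T X') (h'' : ExtensionsSplit R T (X ⧸ X')) :
    ExtensionsSplit R T X := by
  rintro B _ _ K ⟨e⟩ ⟨q⟩
  set P : Submodule R B := (X'.comap e.toLinearMap).map K.subtype
  have hPK : P ≤ K := Submodule.map_subtype_le _ _
  have hP : P.comap K.subtype = X'.comap e.toLinearMap :=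
    Submodule.comap_map_eq_of_injective K.injective_subtype _
  obtain ⟨C, hC⟩ := h'' (B ⧸ P) (K.map P.mkQ)
    ⟨(subquotientEquivMap P K).symm.trans ((Submodule.quotEquivOfEq _ _ hP).trans
      (Submodule.Quotient.equiv _ _ e (Submodule.map_comap_eq_of_surjective e.surjective _)))⟩
    ⟨(P.quotientQuotientEquivQuotient K hPK).trans q⟩
  set B₁ := C.comap P.mkQ
  obtain ⟨C₁, hC₁⟩ := h' B₁ (P.comap B₁.subtype)
    ⟨(Submodule.comapSubtypeEquivOfLe (P.le_comap_mkQ C)).trans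
      ((Submodule.equivMapOfInjective _ K.injective_subtype _).symm.trans
        (e.ofSubmodules _ _ (Submodule.map_comap_eq_of_surjective e.surjective _)))⟩
    ⟨(subquotientComapMkQEquivOfIsCompl hC).trans
      ((P.quotientQuotientEquivQuotient K hPK).trans q)⟩
  exact ⟨_, isCompl_map_subtype_of_isCompl_quotient hPK hC hC₁⟩

theorem ExtensionsSplit.prod (hX : ExtensionsSplit R T X) (hY : ExtensionsSplit R T Y) :
    ExtensionsSplit R T (X × Y) :=
  .of_submodule_quotient (LinearMap.ker (LinearMap.snd R X Y))
    (hX.congr ((LinearEquiv.ofInjective (LinearMap.inl R X Y) LinearMap.inl_injective).trans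
      (LinearEquiv.ofEq _ _ (LinearMap.ker_snd R X Y).symm)))
    (hY.congr ((LinearMap.snd R X Y).quotKerEquivOfSurjective LinearMap.snd_surjective).symm)

theorem ExtensionsSplit.pi (h : ExtensionsSplit R T X) : ∀ n : ℕ, ExtensionsSplit R T (Fin n → X)
  | 0 => .of_subsingleton
  | n + 1 => (h.prod (h.pi n)).congr (Fin.consLinearEquiv R fun _ => X)

end ExtensionsSplit

section HasFiltration

variable {R} {t : ℕ} (θ : Fin t → ModuleCat.{v} R)

/-- The list `L` records the layer types from the top layer down. -/
def HasFiltration : List (Fin t) → (A : Type v) → [AddCommGroup A] → [Module R A] → Prop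
  | [], A, _, _ => Subsingleton A
  | j :: L, A, _, _ => ∃ N : Submodule R A, HasFiltration L N ∧ Nonempty ((A ⧸ N) ≃ₗ[R] θ j)

variable {θ}

theorem HasFiltration.congr : ∀ {L : List (Fin t)} {A B : Type v} [AddCommGroup A] [Module R A]
    [AddCommGroup B] [Module R B] (_ : A ≃ₗ[R] B), HasFiltration θ L A → HasFiltration θ L B
  | [], A, B, _, _, _, _, e, hA => by
    have : Subsingleton A := hA
    exact e.symm.toEquiv.subsingleton
  | j :: L, A, B, _, _, _, _, e, ⟨N, hN, ⟨q⟩⟩ =>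
    ⟨N.map (e : A →ₗ[R] B), HasFiltration.congr (e.submoduleMap N) hN,
      ⟨(Submodule.Quotient.equiv N _ e rfl).symm.trans q⟩⟩

def Filtration.types {M : ModuleCat.{v} R} (F : Filtration R θ M) : List (Fin t) :=
  (List.ofFn F.typ).reverse

theorem Filtration.count_types {M : ModuleCat.{v} R} (F : Filtration R θ M) (j : Fin t) :
    F.types.count j = (Finset.univ.filter fun x => F.typ x = j).card := by
  rw [Filtration.types, List.count_reverse, ← Multiset.coe_count, ← Fin.univ_val_map,
    Multiset.count_map, Finset.card_filter, Finset.sum_boole]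
  simp only [eq_comm]
  rfl

theorem mult_eq_count_types {M : ModuleCat.{v} R} (hM : Nonempty (Filtration R θ M)) (j : Fin t) :
    mult R θ M j = hM.some.types.count j := by
  rw [mult, dif_pos hM, Filtration.count_types]

theorem hasFiltration_of_filtration {M : ModuleCat.{v} R} (F : Filtration R θ M) :
    HasFiltration θ F.types M := by
  have hprefix (k : Fin (F.n + 1)) : HasFiltration θ ((List.ofFn F.typ).take k).reverse (F.c k) := by
    induction k using Fin.induction with
    | zero =>
      rw [F.bot, Fin.val_zero, List.take_zero, List.reverse_nil]
      show Subsingleton _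
      infer_instance
    | succ k ih =>
      have : ((List.ofFn F.typ).take (k + 1)).reverse =
          F.typ k :: ((List.ofFn F.typ).take k).reverse := by
        simp [List.take_add_one]
      rw [Fin.val_succ, this]
      exact ⟨_, ih.congr (Submodule.comapSubtypeEquivOfLe (F.mono k)).symm, F.iso k⟩
  have := hprefix (Fin.last F.n)
  rw [F.top, Fin.val_last, List.take_of_length_le (by simp)] at this
  exact this.congr Submodule.topEquiv

theorem exists_chain_of_hasFiltration {A : Type v} [AddCommGroup A] [Module R A] :
    ∀ {L : List (Fin t)} (P : Submodule R A), HasFiltration θ L P →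
      ∃ (n : ℕ) (c : Fin (n + 1) → Submodule R A) (typ : Fin n → Fin t),
        c 0 = ⊥ ∧ c (Fin.last n) = P ∧ (∀ k : Fin n, c k.castSucc ≤ c k.succ) ∧
        ∀ k : Fin n,
          Nonempty ((c k.succ ⧸ (c k.castSucc).comap (c k.succ).subtype) ≃ₗ[R] θ (typ k))
  | [], P, hP => by
    have : Subsingleton P := hP
    exact ⟨0, fun _ => ⊥, Fin.elim0, rfl, (Submodule.eq_bot_of_subsingleton (p := P)).symm,
      nofun, nofun⟩
  | j :: L, P, ⟨N, hN, ⟨e⟩⟩ => by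
    have hN' : N.map P.subtype ≤ P := Submodule.map_subtype_le _ _
    obtain ⟨n, c, typ, hbot, htop, hmono, hiso⟩ := exists_chain_of_hasFiltration (N.map P.subtype)
      (hN.congr (N.equivMapOfInjective _ P.injective_subtype))
    refine ⟨n + 1, Fin.snoc c P, Fin.snoc typ j, ?_, Fin.snoc_last .., fun k => ?_, fun k => ?_⟩
    · rw [← Fin.castSucc_zero, Fin.snoc_castSucc, hbot]
    · cases k using Fin.lastCases with
      | last => rwa [Fin.succ_last, Fin.snoc_last, Fin.snoc_castSucc, htop]
      | cast k => rw [Fin.succ_castSucc, Fin.snoc_castSucc, Fin.snoc_castSucc]; exact hmono k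
    · cases k using Fin.lastCases with
      | last =>
        rw [Fin.succ_last, Fin.snoc_last, Fin.snoc_castSucc, Fin.snoc_last, htop,
          Submodule.comap_map_eq_of_injective P.injective_subtype]
        exact ⟨e⟩
      | cast k =>
        rw [Fin.succ_castSucc, Fin.snoc_castSucc, Fin.snoc_castSucc, Fin.snoc_castSucc]
        exact hiso k

theorem nonempty_filtration_of_hasFiltration {L : List (Fin t)} {A : Type v} [AddCommGroup A]
    [Module R A] (hA : HasFiltration θ L A) : Nonempty (Filtration R θ (ModuleCat.of R A)) := by
  obtain ⟨n, c, typ, hbot, htop, hmono, hiso⟩ :=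
    exists_chain_of_hasFiltration ⊤ (hA.congr Submodule.topEquiv.symm)
  exact ⟨⟨n, c, hbot, htop, hmono, typ, hiso⟩⟩

theorem HasFiltration.moduleFinite (hθ : ∀ j, Module.Finite R (θ j)) :
    ∀ {L : List (Fin t)} {A : Type v} [AddCommGroup A] [Module R A],
      HasFiltration θ L A → Module.Finite R A
  | [], A, _, _, hA => by
    have : Subsingleton A := hA
    infer_instance
  | _ :: _, _, _, _, ⟨N, hN, ⟨e⟩⟩ => by
    have := HasFiltration.moduleFinite hθ hN
    have := Module.Finite.equiv e.symm
    exact Module.Finite.of_submodule_quotient N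

theorem HasFiltration.linearMap_eq_zero {T : Type*} [AddCommGroup T] [Module R T] :
    ∀ {L : List (Fin t)} {A : Type v} [AddCommGroup A] [Module R A], HasFiltration θ L A →
      (∀ k ∈ L, ∀ ψ : θ k →ₗ[R] T, ψ = 0) → ∀ φ : A →ₗ[R] T, φ = 0
  | [], A, _, _, hA, _, φ => by
    have : Subsingleton A := hA
    exact Subsingleton.elim _ _
  | k :: _, _, _, _, ⟨N, hN, ⟨e⟩⟩, hL, φ => by
    have hφN : N ≤ LinearMap.ker φ := fun x hx => by
      simpa using LinearMap.congr_fun (HasFiltration.linearMap_eq_zero hN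
        (fun k hk => hL k (List.mem_cons_of_mem _ hk)) (φ ∘ₗ N.subtype)) ⟨x, hx⟩
    have h0 := hL k List.mem_cons_self (N.liftQ φ hφN ∘ₗ e.symm.toLinearMap)
    ext x
    simpa using LinearMap.congr_fun h0 (e (N.mkQ x))

end HasFiltration

section ShortExact

variable {R}

theorem shortExact_of_function_exact {X₁ X₂ X₃ : ModuleCat.{v} R} (f : X₁ ⟶ X₂) (g : X₂ ⟶ X₃)
    (w : f ≫ g = 0) (hfg : Function.Exact f g) (hf : Function.Injective f)
    (hg : Function.Surjective g) : (ShortComplex.mk f g w).ShortExact :=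
  .mk' ((ShortComplex.ShortExact.moduleCat_exact_iff_function_exact _).mpr hfg)
    ((ModuleCat.mono_iff_injective f).mpr hf) ((ModuleCat.epi_iff_surjective g).mpr hg)

theorem exists_shortExact_of_quotient {M X : ModuleCat.{v} R} (N : Submodule R M)
    (e : (M ⧸ N) ≃ₗ[R] X) :
    ∃ (f : ModuleCat.of R N ⟶ M) (g : M ⟶ X) (w : f ≫ g = 0),
      (ShortComplex.mk f g w).ShortExact :=
  ⟨ModuleCat.ofHom N.subtype, ModuleCat.ofHom (e.toLinearMap ∘ₗ N.mkQ), by ext; simp,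
    shortExact_of_function_exact _ _ _
      ((LinearMap.exact_subtype_mkQ N).comp_injective _ e.injective e.map_zero)
      N.injective_subtype (e.surjective.comp N.mkQ_surjective)⟩

end ShortExact

namespace StratSys

variable {R} {t : ℕ} (S : StratSys R t)

theorem extensionsSplit {k j : Fin t} (hkj : k ≤ j) : ExtensionsSplit R (S.θ j) (S.θ k) := by
  rintro B _ _ K ⟨e⟩ ⟨q⟩
  have hK : LinearMap.ker (q.toLinearMap ∘ₗ K.mkQ) = K := by
    rw [LinearEquiv.ker_comp, Submodule.ker_mkQ]
  obtain ⟨s, hs⟩ := S.extZero k j hkj (ModuleCat.of R B)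
    (ModuleCat.ofHom (K.subtype ∘ₗ e.symm.toLinearMap))
    (ModuleCat.ofHom (q.toLinearMap ∘ₗ K.mkQ)) (by ext; simp)
    (shortExact_of_function_exact _ _ _
      (LinearMap.exact_iff.mpr (by simp [LinearMap.range_comp, hK]))
      (K.injective_subtype.comp e.symm.injective) (q.surjective.comp K.mkQ_surjective))
  refine ⟨LinearMap.range s.hom, hK ▸ isCompl_ker_range_of_comp_eq_id ?_⟩
  exact congrArg ModuleCat.Hom.hom hs

theorem linearMap_eq_zero {i j : Fin t} (hij : i < j) (ψ : S.θ j →ₗ[R] S.θ i) : ψ = 0 :=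
  congrArg ModuleCat.Hom.hom (S.homZero i j hij (ModuleCat.ofHom ψ))

theorem nontrivial (i : Fin t) : Nontrivial (S.θ i) :=
  not_subsingleton_iff_nontrivial.mp fun _ => (S.indec i).1 (ModuleCat.isZero_of_subsingleton _)

end StratSys

section TopQuotient

variable {R} {t : ℕ} (S : StratSys R t)

/-- Since extensions of `θ j` by `θ i` split for `i ≤ j`, the `θ i`-layers can be moved to the
top. -/
theorem exists_quotient_pow {i : Fin t} :
    ∀ {L : List (Fin t)} {A : Type} [AddCommGroup A] [Module R A], HasFiltration S.θ L A →
      (∀ a ∈ L, i ≤ a) → ∃ N : Submodule R A, HasFiltration S.θ (L.filter (· ≠ i)) N ∧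
        Nonempty ((A ⧸ N) ≃ₗ[R] (Fin (L.count i) → S.θ i))
  | [], A, _, _, hA, _ => by
    have : Subsingleton A := hA
    rw [List.count_nil]
    exact ⟨⊤, inferInstanceAs (Subsingleton (⊤ : Submodule R A)),
      ⟨LinearEquiv.ofSubsingleton _ _⟩⟩
  | j :: L, A, _, _, ⟨K, hK, ⟨e⟩⟩, hL => by
    obtain ⟨N', hN', ⟨q⟩⟩ := exists_quotient_pow hK fun a ha => hL a (List.mem_cons_of_mem _ ha)
    set P := N'.map K.subtype
    have hPK : P ≤ K := Submodule.map_subtype_le _ _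
    have hP : HasFiltration S.θ (L.filter (· ≠ i)) P :=
      hN'.congr (N'.equivMapOfInjective _ K.injective_subtype)
    have eK : K.map P.mkQ ≃ₗ[R] (Fin (L.count i) → S.θ i) :=
      (subquotientEquivMap P K).symm.trans ((Submodule.quotEquivOfEq _ _
        (Submodule.comap_map_eq_of_injective K.injective_subtype N')).trans q)
    have eQ : ((A ⧸ P) ⧸ K.map P.mkQ) ≃ₗ[R] S.θ j := (P.quotientQuotientEquivQuotient K hPK).trans e
    obtain ⟨C, hC⟩ := ((S.extensionsSplit (hL j List.mem_cons_self)).pi _) _ _ ⟨eK⟩ ⟨eQ⟩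
    by_cases hji : j = i
    · subst hji
      refine ⟨P, by simpa using hP, ⟨?_⟩⟩
      rw [List.count_cons_self]
      exact (Submodule.prodEquivOfIsCompl _ _ hC).symm.trans ((LinearEquiv.prodComm _ _ _).trans
        ((((Submodule.quotientEquivOfIsCompl _ _ hC).symm.trans eQ).prodCongr eK).trans
          (Fin.consLinearEquiv R fun _ => S.θ j)))
    · refine ⟨C.comap P.mkQ, ?_, ⟨?_⟩⟩
      · rw [List.filter_cons_of_pos (by simpa using hji)]
        exact ⟨_, hP.congr (Submodule.comapSubtypeEquivOfLe (P.le_comap_mkQ C)).symm,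
          ⟨(subquotientComapMkQEquivOfIsCompl hC).trans eQ⟩⟩
      · rw [List.count_cons_of_ne hji]
        exact (quotientComapMkQEquivOfIsCompl hC).trans eK

theorem exists_surjective_of_hasFiltration {L : List (Fin t)} {A : Type} [AddCommGroup A]
    [Module R A] (hA : HasFiltration S.θ L A) {i : Fin t} (hi : i ∈ L) (hmin : ∀ a ∈ L, i ≤ a) :
    ∃ φ : A →ₗ[R] S.θ i, Function.Surjective φ := by
  obtain ⟨N, -, ⟨e⟩⟩ := exists_quotient_pow S hA hmin
  refine ⟨LinearMap.proj ⟨0, List.count_pos_iff.mpr hi⟩ ∘ₗ e.toLinearMap ∘ₗ N.mkQ, ?_⟩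
  exact (Function.surjective_eval _).comp (e.surjective.comp N.mkQ_surjective)

/-- The least type `i₀` of `L'` is a quotient of `A`, while `Hom(θ a, θ i₀) = 0` for `a ∈ L`
unless `i < i₀`. -/
theorem lt_of_mem_of_hasFiltration {L L' : List (Fin t)} {A : Type} [AddCommGroup A] [Module R A]
    (hL : HasFiltration S.θ L A) (hL' : HasFiltration S.θ L' A) {i j : Fin t}
    (hi : ∀ a ∈ L, i < a) (hj : j ∈ L') : i < j := by
  have hne : L'.toFinset.Nonempty := ⟨j, List.mem_toFinset.mpr hj⟩
  set i₀ := L'.toFinset.min' hne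
  have hmin : ∀ a ∈ L', i₀ ≤ a := fun a ha => Finset.min'_le _ a (List.mem_toFinset.mpr ha)
  obtain ⟨φ, hφ⟩ := exists_surjective_of_hasFiltration S hL'
    (List.mem_toFinset.mp (Finset.min'_mem _ hne)) hmin
  refine lt_of_lt_of_le (not_le.mp fun hi₀ => ?_) (hmin j hj)
  have hφ0 : φ = 0 := hL.linearMap_eq_zero
    (fun a ha => S.linearMap_eq_zero (lt_of_le_of_lt hi₀ (hi a ha))) φ
  have := S.nontrivial i₀
  obtain ⟨y, hy⟩ := exists_ne (0 : S.θ i₀)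
  obtain ⟨x, rfl⟩ := hφ y
  exact hy (by simp [hφ0])

end TopQuotient

theorem stmt19_general (R : Type) [Ring R] {t : ℕ} (S : StratSys R t)
    (M : ModuleCat R) (hM : InFilt R S.θ M) (i : Fin t)
    (hmin : ∀ j : Fin t, mult R S.θ M j ≠ 0 → i ≤ j) :
    ∃ N : ModuleCat R, Module.Finite R N ∧ InFilt R S.θ N ∧
      (∀ j : Fin t, mult R S.θ N j ≠ 0 → i < j) ∧
      ∃ (f : N ⟶ M) (g : M ⟶ ⨁ fun _ : Fin (mult R S.θ M i) => S.θ i) (w : f ≫ g = 0),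
        (CategoryTheory.ShortComplex.mk f g w).ShortExact := by
  have hLmin : ∀ a ∈ hM.some.types, i ≤ a := fun a ha =>
    hmin a (by rw [mult_eq_count_types hM]; exact (List.count_pos_iff.mpr ha).ne')
  obtain ⟨N, hN, ⟨e⟩⟩ := exists_quotient_pow S (hasFiltration_of_filtration hM.some) hLmin
  rw [← mult_eq_count_types hM] at e
  have hN' := nonempty_filtration_of_hasFiltration hN
  refine ⟨ModuleCat.of R N, hN.moduleFinite S.fg, hN', fun j hj => ?_,
    exists_shortExact_of_quotient N (e.trans (ModuleCat.biproductIsoPi _).toLinearEquiv.symm)⟩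
  rw [mult_eq_count_types hN'] at hj
  refine lt_of_mem_of_hasFiltration S hN (hasFiltration_of_filtration hN'.some) (fun a ha => ?_)
    (List.count_pos_iff.mp (Nat.pos_of_ne_zero hj))
  obtain ⟨haL, hai⟩ := List.mem_filter.mp ha
  exact lt_of_le_of_ne (hLmin a haL) (of_decide_eq_true hai).symm

theorem stmt19 (k R : Type) [Field k] [IsAlgClosed k] [Ring R] [Algebra k R]
    [FiniteDimensional k R] {t : ℕ} (S : StratSys R t)
    (M : ModuleCat R) [Module.Finite R M] (hM : InFilt R S.θ M)
    (hM0 : ¬ CategoryTheory.Limits.IsZero M) (i : Fin t)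
    (hi : mult R S.θ M i ≠ 0) (hmin : ∀ j : Fin t, mult R S.θ M j ≠ 0 → i ≤ j) :
    ∃ N : ModuleCat R, Module.Finite R N ∧ InFilt R S.θ N ∧
      (∀ j : Fin t, mult R S.θ N j ≠ 0 → i < j) ∧
      ∃ (f : N ⟶ M) (g : M ⟶ ⨁ fun _ : Fin (mult R S.θ M i) => S.θ i) (w : f ≫ g = 0),
        (CategoryTheory.ShortComplex.mk f g w).ShortExact :=
  stmt19_general R S M hM i hmin

end ITPaper
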